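/- arXiv:2310.19662 — 2 statements merged into one kernel-verified Lean document; each statement's English description precedes it below -/
import Mathlib

section
/- Let μ ∈ ℝ and σ > 0, and let N(μ, σ²) denote the Gaussian distribution with mean μ and variance σ². Then the average Metropolis acceptance probabilities with the Ceperley–Dewing correction satisfy the average detailed balance identity: ∫ min{1, exp(−x − σ²/2)} dN(μ, σ²)(x) = e^{−μ} · ∫ min{1, exp(−x − σ²/2)} dN(−μ, σ²)(x). -/
/-!
With `s = σ²`, the acceptance function `a x = min 1 (exp (-x - s/2))` satisfies
`a x = exp (-x - s/2) * a (-s - x)`. The measure with density `exp (-x)` against `N(μ, s)` is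
`exp (-μ + s/2) • N(μ - s, s)`, and the reflection `x ↦ -s - x` carries `N(μ - s, s)` to `N(-μ, s)`.
-/

open MeasureTheory ProbabilityTheory Real
open scoped NNReal

lemma min_one_exp_neg (t : ℝ) : min 1 (exp (-t)) = exp (-t) * min 1 (exp t) := by
  rw [mul_min_of_nonneg _ _ (exp_nonneg _), mul_one, ← exp_add, neg_add_cancel, exp_zero, min_comm]

lemma gaussianPDFReal_mul_exp_neg (μ : ℝ) (v : ℝ≥0) (x : ℝ) :
    gaussianPDFReal μ v x * exp (-x) = exp (-μ + v / 2) * gaussianPDFReal (μ - v) v x := by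
  rcases eq_or_ne v 0 with rfl | hv
  · simp [gaussianPDFReal]
  have hv' : (v : ℝ) ≠ 0 := by exact_mod_cast hv
  simp only [gaussianPDFReal]
  rw [mul_left_comm, mul_assoc, ← exp_add, ← exp_add]
  congr 2
  field_simp
  ring

lemma integral_exp_neg_mul_gaussianReal (μ : ℝ) (v : ℝ≥0) (g : ℝ → ℝ) :
    ∫ x, exp (-x) * g x ∂gaussianReal μ v =
      exp (-μ + v / 2) * ∫ x, g x ∂gaussianReal (μ - v) v := by
  rcases eq_or_ne v 0 with rfl | hv
  · simp
  simp only [integral_gaussianReal_eq_integral_smul hv, smul_eq_mul, ← integral_const_mul,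
    ← mul_assoc, gaussianPDFReal_mul_exp_neg]

lemma integral_comp_const_sub_gaussianReal {E : Type*} [NormedAddCommGroup E] [NormedSpace ℝ E]
    (μ : ℝ) (v : ℝ≥0) (y : ℝ) (g : ℝ → E) :
    ∫ x, g (y - x) ∂gaussianReal μ v = ∫ x, g x ∂gaussianReal (y - μ) v := by
  rw [← gaussianReal_map_const_sub]
  exact ((Homeomorph.subLeft y).measurableEmbedding.integral_map g).symm

theorem ceperley_dewing_average_detailed_balance_general (μ σ : ℝ) :
    ∫ x, min 1 (Real.exp (-x - σ ^ 2 / 2))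
        ∂(gaussianReal μ ⟨σ ^ 2, sq_nonneg σ⟩) =
      Real.exp (-μ) *
        ∫ x, min 1 (Real.exp (-x - σ ^ 2 / 2))
          ∂(gaussianReal (-μ) ⟨σ ^ 2, sq_nonneg σ⟩) := by
  set v : ℝ≥0 := ⟨σ ^ 2, sq_nonneg σ⟩
  set a : ℝ → ℝ := fun x ↦ min 1 (exp (-x - v / 2))
  have reversal (x : ℝ) : a x = exp (-x) * (exp (-(v / 2)) * a (-v - x)) := by
    have h₁ : -x - v / 2 = -(x + v / 2) := by ring
    have h₂ : -(-v - x) - v / 2 = x + v / 2 := by ring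
    simp only [a, h₁, h₂, min_one_exp_neg, ← mul_assoc, ← exp_add]
    ring_nf
  calc ∫ x, a x ∂gaussianReal μ v
      = ∫ x, exp (-x) * (exp (-(v / 2)) * a (-v - x)) ∂gaussianReal μ v := by simp_rw [← reversal]
    _ = exp (-μ) * ∫ x, a (-v - x) ∂gaussianReal (μ - v) v := by
      rw [integral_exp_neg_mul_gaussianReal, integral_const_mul, ← mul_assoc, ← exp_add]
      ring_nf
    _ = exp (-μ) * ∫ x, a x ∂gaussianReal (-μ) v := by
      rw [integral_comp_const_sub_gaussianReal]
      ring_nf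

/-- For `μ ∈ ℝ` and `σ > 0`, the average Metropolis acceptance
probabilities with the Ceperley–Dewing correction satisfy the average detailed balance
identity:
`∫ min {1, exp (−x − σ²/2)} dN(μ, σ²)(x)
  = e^{−μ} * ∫ min {1, exp (−x − σ²/2)} dN(−μ, σ²)(x)`. -/
theorem ceperley_dewing_average_detailed_balance (μ σ : ℝ) (hσ : 0 < σ) :
    ∫ x, min 1 (Real.exp (-x - σ ^ 2 / 2))
        ∂(gaussianReal μ ⟨σ ^ 2, sq_nonneg σ⟩) =
      Real.exp (-μ) *
        ∫ x, min 1 (Real.exp (-x - σ ^ 2 / 2))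
          ∂(gaussianReal (-μ) ⟨σ ^ 2, sq_nonneg σ⟩) :=
  ceperley_dewing_average_detailed_balance_general μ σ
end

section
/- Let μ ∈ ℝ and σ > 0, let X be a random variable with distribution N(μ, σ²), and let Φ denote the standard normal cumulative distribution function. Then E[min{1, exp(−X − σ²/2)}] = Φ(−μ/σ − σ/2) + e^{−μ} · Φ(μ/σ − σ/2). -/
/-!
Split the expectation at `-σ²/2`, where the acceptance probability stops being `1`. Below that
point the integrand is `1` and contributes `P(X ≤ -σ²/2) = Φ(-μ/σ - σ/2)`. Above it, the
exponential tilting `p_{μ,σ²}(x) e^{-x} = e^{-μ+σ²/2} p_{μ-σ²,σ²}(x)` of the Gaussian density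
turns the integral into `e^{-μ}` times the probability that `N(μ - σ², σ²)` exceeds `-σ²/2`,
which is `Φ(μ/σ - σ/2)` by the symmetry `Φ(-z) = 1 - Φ(z)`.
-/

open MeasureTheory ProbabilityTheory

/-- The standard normal cumulative distribution function
`Φ(z) = ∫_{−∞}^{z} (1/√(2π)) e^{−u²/2} du`. -/
noncomputable def stdNormalCDF (z : ℝ) : ℝ :=
  ∫ u in Set.Iic z, (1 / Real.sqrt (2 * Real.pi)) * Real.exp (-u ^ 2 / 2)

open Real Set NNReal

lemma measureReal_gaussianReal (μ : ℝ) {v : ℝ≥0} (hv : v ≠ 0) (s : Set ℝ) :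
    (gaussianReal μ v).real s = ∫ x in s, gaussianPDFReal μ v x := by
  rw [measureReal_def, gaussianReal_apply_eq_integral μ hv,
    ENNReal.toReal_ofReal (setIntegral_nonneg_of_ae (ae_of_all _ (gaussianPDFReal_nonneg μ v)))]

lemma stdNormalCDF_eq_measureReal (z : ℝ) : stdNormalCDF z = (gaussianReal 0 1).real (Iic z) := by
  simp [measureReal_gaussianReal 0 one_ne_zero, stdNormalCDF, gaussianPDFReal, one_div]

lemma stdNormalCDF_neg (z : ℝ) : stdNormalCDF (-z) = 1 - stdNormalCDF z := by
  have := nullSingletonClass_gaussianReal (μ := 0) one_ne_zero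
  have hsymm : (gaussianReal 0 1).map (fun x ↦ -x) = gaussianReal 0 1 := by
    simpa using gaussianReal_map_neg (μ := 0) (v := 1)
  rw [stdNormalCDF_eq_measureReal, stdNormalCDF_eq_measureReal, ← hsymm,
    map_measureReal_apply measurable_neg measurableSet_Iic, hsymm, neg_preimage, neg_Iic, neg_neg,
    ← measureReal_congr (Ioi_ae_eq_Ici' (measure_singleton z)), ← compl_Iic,
    probReal_compl_eq_one_sub measurableSet_Iic]

lemma gaussianReal_map_standardize (μ : ℝ) {v : ℝ≥0} {σ : ℝ} (hσ : σ ≠ 0)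
    (hvσ : (v : ℝ) = σ ^ 2) :
    (gaussianReal μ v).map (fun x ↦ (x - μ) / σ) = gaussianReal 0 1 := by
  have : (fun x ↦ (x - μ) / σ) = (· / σ) ∘ (· - μ) := rfl
  rw [this, ← Measure.map_map (by fun_prop) (by fun_prop), gaussianReal_map_sub_const,
    gaussianReal_map_div_const, sub_self, zero_div]
  congr
  ext
  simp [hvσ, hσ]

lemma measureReal_gaussianReal_Iic (μ : ℝ) {v : ℝ≥0} {σ : ℝ} (hσ : 0 < σ)
    (hvσ : (v : ℝ) = σ ^ 2) (c : ℝ) :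
    (gaussianReal μ v).real (Iic c) = stdNormalCDF ((c - μ) / σ) := by
  have hpre : (fun x ↦ (x - μ) / σ) ⁻¹' Iic ((c - μ) / σ) = Iic c := by
    ext x
    simp [div_le_div_iff_of_pos_right hσ]
  rw [stdNormalCDF_eq_measureReal, ← gaussianReal_map_standardize μ hσ.ne' hvσ,
    map_measureReal_apply (by fun_prop) measurableSet_Iic, hpre]

lemma measureReal_gaussianReal_Ioi (μ : ℝ) {v : ℝ≥0} {σ : ℝ} (hσ : 0 < σ)
    (hvσ : (v : ℝ) = σ ^ 2) (c : ℝ) :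
    (gaussianReal μ v).real (Ioi c) = stdNormalCDF ((μ - c) / σ) := by
  rw [← compl_Iic, probReal_compl_eq_one_sub measurableSet_Iic,
    measureReal_gaussianReal_Iic μ hσ hvσ, ← stdNormalCDF_neg, ← neg_div, neg_sub]

lemma gaussianPDFReal_mul_exp_mul (μ : ℝ) (v : ℝ≥0) (t x : ℝ) :
    gaussianPDFReal μ v x * exp (t * x) =
      exp (μ * t + v * t ^ 2 / 2) * gaussianPDFReal (μ + v * t) v x := by
  rcases eq_or_ne v 0 with rfl | hv
  · simp
  have hv' : (v : ℝ) ≠ 0 := by exact_mod_cast hv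
  simp only [gaussianPDFReal]
  rw [mul_assoc, ← exp_add, mul_left_comm, ← exp_add]
  congr 2
  field_simp
  ring

lemma setIntegral_gaussianReal_eq_setIntegral_mul (μ : ℝ) {v : ℝ≥0} (hv : v ≠ 0) {s : Set ℝ}
    (hs : MeasurableSet s) (f : ℝ → ℝ) :
    ∫ x in s, f x ∂gaussianReal μ v = ∫ x in s, gaussianPDFReal μ v x * f x := by
  rw [gaussianReal_of_var_ne_zero μ hv, gaussianPDF_def,
    setIntegral_withDensity_eq_setIntegral_toReal_smul (by fun_prop)
      (ae_of_all _ fun _ ↦ ENNReal.ofReal_lt_top) f hs]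
  simp [ENNReal.toReal_ofReal (gaussianPDFReal_nonneg μ v _)]

lemma setIntegral_exp_mul_gaussianReal (μ : ℝ) {v : ℝ≥0} (hv : v ≠ 0) {s : Set ℝ}
    (hs : MeasurableSet s) (t : ℝ) :
    ∫ x in s, exp (t * x) ∂gaussianReal μ v =
      exp (μ * t + v * t ^ 2 / 2) * (gaussianReal (μ + v * t) v).real s := by
  simp_rw [setIntegral_gaussianReal_eq_setIntegral_mul μ hv hs, gaussianPDFReal_mul_exp_mul,
    integral_const_mul, measureReal_gaussianReal _ hv]

lemma integral_min_one_exp_gaussianReal (μ : ℝ) {v : ℝ≥0} {σ : ℝ} (hσ : 0 < σ)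
    (hvσ : (v : ℝ) = σ ^ 2) :
    ∫ x, min 1 (exp (-x - σ ^ 2 / 2)) ∂gaussianReal μ v =
      stdNormalCDF (-μ / σ - σ / 2) + exp (-μ) * stdNormalCDF (μ / σ - σ / 2) := by
  have hv : v ≠ 0 := by
    rintro rfl
    exact (pow_pos hσ 2).ne' (by simpa using hvσ.symm)
  have hint : Integrable (fun x ↦ min 1 (exp (-x - σ ^ 2 / 2))) (gaussianReal μ v) :=
    (integrable_const 1).mono' (by fun_prop) (ae_of_all _ fun x ↦ by
      rw [Real.norm_of_nonneg (le_min zero_le_one (exp_pos _).le)]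
      exact min_le_left _ _)
  set c := -σ ^ 2 / 2 with hc
  have hIic : ∫ x in Iic c, min 1 (exp (-x - σ ^ 2 / 2)) ∂gaussianReal μ v =
      (gaussianReal μ v).real (Iic c) := by
    rw [setIntegral_congr_fun measurableSet_Iic fun x (hx : x ≤ c) ↦
      min_eq_left (one_le_exp (by linarith [hc])), setIntegral_const, smul_eq_mul, mul_one]
  have hIoi : ∫ x in Ioi c, min 1 (exp (-x - σ ^ 2 / 2)) ∂gaussianReal μ v =
      exp (-σ ^ 2 / 2) * ∫ x in Ioi c, exp (-1 * x) ∂gaussianReal μ v := by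
    rw [← integral_const_mul]
    refine setIntegral_congr_fun measurableSet_Ioi fun x (hx : c < x) ↦ ?_
    rw [min_eq_right (exp_le_one_iff.2 (by linarith [hc])), ← exp_add]
    ring_nf
  rw [← intervalIntegral.integral_Iic_add_Ioi hint.integrableOn hint.integrableOn, hIic, hIoi,
    setIntegral_exp_mul_gaussianReal μ hv measurableSet_Ioi,
    measureReal_gaussianReal_Iic μ hσ hvσ, measureReal_gaussianReal_Ioi _ hσ hvσ,
    ← mul_assoc, ← exp_add, hvσ, hc]
  congr 3
  · field_simp
    ring
  · ring
  · field_simp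
    ring

/-- Let `μ ∈ ℝ`, `σ > 0`, and let `X` be a random variable with
distribution `N(μ, σ²)`. Then
`E[min {1, exp (−X − σ²/2)}] = Φ(−μ/σ − σ/2) + e^{−μ} · Φ(μ/σ − σ/2)`,
where `Φ` is the standard normal CDF. -/
theorem ceperley_dewing_acceptance_expectation {Ω : Type*} [MeasurableSpace Ω]
    (P : Measure Ω) [IsProbabilityMeasure P] (μ σ : ℝ) (hσ : 0 < σ)
    (X : Ω → ℝ) (hX : Measurable X)
    (hlaw : P.map X = gaussianReal μ ⟨σ ^ 2, sq_nonneg σ⟩) :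
    ∫ ω, min 1 (Real.exp (-X ω - σ ^ 2 / 2)) ∂P =
      stdNormalCDF (-μ / σ - σ / 2) +
        Real.exp (-μ) * stdNormalCDF (μ / σ - σ / 2) := by
  rw [← integral_map (f := fun x ↦ min 1 (exp (-x - σ ^ 2 / 2))) hX.aemeasurable
    (by fun_prop), hlaw]
  exact integral_min_one_exp_gaussianReal μ hσ rfl
end
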